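/- Let φ : ℂ³ → ℂ³ be given by φ(x, y, z) = (I·(x − y)³, (x + y)³, z³), and let φ̄ : ℂ³ → ℂ³ (the map obtained by applying complex conjugation to the coefficients of φ) be φ̄(x, y, z) = (−I·(x − y)³, (x + y)³, z³). Then there exists F ∈ GL₃(ℂ) such that for every v ∈ ℂ³ with v ≠ 0 there exists c ∈ ℂ with c ≠ 0 such that φ̄(v) = c • (F⁻¹·φ(F·v)). (That is, φ̄ = φ^F as endomorphisms of ℙ²(ℂ), so the field of moduli of φ is ℚ.) -/

import Mathlib

open Matrix

noncomputable def phiEx2 (v : Fin 3 → ℂ) : Fin 3 → ℂ :=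
  ![Complex.I * (v 0 - v 1) ^ 3, (v 0 + v 1) ^ 3, (v 2) ^ 3]

noncomputable def phiEx2Bar (v : Fin 3 → ℂ) : Fin 3 → ℂ :=
  ![-Complex.I * (v 0 - v 1) ^ 3, (v 0 + v 1) ^ 3, (v 2) ^ 3]

/-! Conjugation by `F : (x, y, z) ↦ (-b y, b x, z)` exchanges the roles of `x - y` and `x + y`;
choosing `b ^ 2 = -I` makes the resulting factors match the coefficients of `φ̄`, so `φ̄ = φ^F`
holds on the nose, with `c = 1`. -/

section SwapMatrix

variable {K : Type*} [Field K]

def swapMatrix (a b : K) : Matrix (Fin 3) (Fin 3) K :=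
  !![0, a, 0; b, 0, 0; 0, 0, 1]

lemma swapMatrix_mul_swapMatrix_inv {a b : K} (ha : a ≠ 0) (hb : b ≠ 0) :
    swapMatrix a b * swapMatrix b⁻¹ a⁻¹ = 1 := by
  rw [swapMatrix, swapMatrix, mul_fin_three, one_fin_three]
  simp [ha, hb]

def swapMatrixGL {a b : K} (ha : a ≠ 0) (hb : b ≠ 0) : GL (Fin 3) K :=
  ⟨swapMatrix a b, swapMatrix b⁻¹ a⁻¹, swapMatrix_mul_swapMatrix_inv ha hb,
    by simpa using swapMatrix_mul_swapMatrix_inv (inv_ne_zero hb) (inv_ne_zero ha)⟩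

end SwapMatrix

lemma swapMatrix_inv_mulVec_phiEx2 {b : ℂ} (hb : b ≠ 0) (v : Fin 3 → ℂ) :
    swapMatrix b⁻¹ (-b)⁻¹ *ᵥ phiEx2 (swapMatrix (-b) b *ᵥ v) =
      ![b ^ 2 * (v 0 - v 1) ^ 3, Complex.I * b ^ 2 * (v 0 + v 1) ^ 3, v 2 ^ 3] := by
  ext i
  fin_cases i <;> simp [swapMatrix, phiEx2, mulVec, dotProduct, Fin.sum_univ_three] <;>
    field_simp <;> ring

theorem example2_field_of_moduli_Q :
    ∃ F : Matrix.GeneralLinearGroup (Fin 3) ℂ,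
      ∀ v : Fin 3 → ℂ, v ≠ 0 → ∃ c : ℂ, c ≠ 0 ∧
        phiEx2Bar v =
          c • ((↑(F⁻¹) : Matrix (Fin 3) (Fin 3) ℂ).mulVec
            (phiEx2 ((F : Matrix (Fin 3) (Fin 3) ℂ).mulVec v))) := by
  obtain ⟨b, hb⟩ := IsAlgClosed.exists_eq_mul_self (-Complex.I)
  have hb0 : b ≠ 0 := by rintro rfl; simp at hb
  refine ⟨swapMatrixGL (neg_ne_zero.mpr hb0) hb0, fun v _ => ⟨1, one_ne_zero, ?_⟩⟩
  rw [one_smul]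
  change _ = swapMatrix b⁻¹ (-b)⁻¹ *ᵥ phiEx2 (swapMatrix (-b) b *ᵥ v)
  rw [swapMatrix_inv_mulVec_phiEx2 hb0, sq, ← hb, phiEx2Bar, mul_neg, Complex.I_mul_I, neg_neg,
    one_mul]
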